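/- arXiv:2109.14375 — 7 statements merged into one kernel-verified Lean document; each statement's English description precedes it below -/
import Mathlib

section
/- Given 0 < a < 1 and a natural number Q, the sum ∑_{q=0}^{Q-1} a^q / √(q+1) is at most 2 / (a √(1 - a)). -/
/-!
Since `1 / √(q+1) ≤ 2 (√(q+1) - √q)`, it suffices to bound `∑ aᵠ (√(q+1) - √q)` by
`1 / √(1-a)`. Summation by parts turns this sum into a combination of the values `√n` with
nonnegative weights, so it may be estimated by replacing `√n` with the tangent line
`(s² n + 1) / (2 s)`, `s = √(1-a)`, whose increments are constant and whose sum is geometric.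
-/

open Finset Real

theorem one_div_sqrt_add_one_le {x : ℝ} (hx : 0 ≤ x) :
    1 / √(x + 1) ≤ 2 * (√(x + 1) - √x) := by
  have hv : 0 < √(x + 1) := sqrt_pos.mpr (by linarith)
  have hvu : √(x + 1) ^ 2 = √x ^ 2 + 1 := by rw [sq_sqrt (by linarith), sq_sqrt hx]
  rw [div_le_iff₀ hv]
  nlinarith [sq_nonneg (√(x + 1) - √x)]

theorem sqrt_le_sq_mul_add_one_div {s : ℝ} (hs : 0 < s) {x : ℝ} (hx : 0 ≤ x) :
    √x ≤ (s ^ 2 * x + 1) / (2 * s) := by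
  rw [le_div_iff₀ (by positivity)]
  nlinarith [sq_nonneg (s * √x - 1), sq_sqrt hx]

theorem sum_pow_mul_sub {R : Type*} [CommRing R] (a : R) (f : ℕ → R) (Q : ℕ) :
    ∑ q ∈ range Q, a ^ q * (f (q + 1) - f q) + f 0 =
      (1 - a) * ∑ q ∈ range Q, a ^ q * f (q + 1) + a ^ Q * f Q := by
  induction Q with
  | zero => simp
  | succ n ih =>
    simp only [sum_range_succ]
    linear_combination ih

theorem sum_pow_mul_sub_le_of_le {a : ℝ} (ha0 : 0 ≤ a) (ha1 : a ≤ 1) {f g : ℕ → ℝ}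
    (hfg : ∀ n, f n ≤ g n) (Q : ℕ) :
    ∑ q ∈ range Q, a ^ q * (f (q + 1) - f q) + f 0 ≤
      ∑ q ∈ range Q, a ^ q * (g (q + 1) - g q) + g 0 := by
  rw [sum_pow_mul_sub, sum_pow_mul_sub]
  have h1a : 0 ≤ 1 - a := by linarith
  gcongr with q
  exacts [hfg _, hfg _]

theorem sum_pow_mul_sqrt_sub_le {a : ℝ} (ha0 : 0 ≤ a) (ha1 : a < 1) (Q : ℕ) :
    ∑ q ∈ range Q, a ^ q * (√(q + 1 : ℕ) - √q) ≤ 1 / √(1 - a) := by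
  set s := √(1 - a)
  have hs : 0 < s := sqrt_pos.mpr (by linarith)
  have hs2 : s ^ 2 = 1 - a := sq_sqrt (by linarith)
  have hgeom : s ^ 2 * ∑ q ∈ range Q, a ^ q ≤ 1 := by
    rw [hs2, mul_neg_geom_sum]
    linarith [pow_nonneg ha0 Q]
  have hparts := sum_pow_mul_sub_le_of_le ha0 ha1.le
    (fun n ↦ sqrt_le_sq_mul_add_one_div hs n.cast_nonneg) Q
  have hinc : ∀ q : ℕ,
      (s ^ 2 * (q + 1 : ℕ) + 1) / (2 * s) - (s ^ 2 * q + 1) / (2 * s) = s / 2 := by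
    intro q
    field_simp
    push_cast
    ring
  simp only [hinc, Nat.cast_zero, sqrt_zero, add_zero, mul_zero, zero_add, ← sum_mul] at hparts
  calc ∑ q ∈ range Q, a ^ q * (√(q + 1 : ℕ) - √q)
      ≤ (∑ q ∈ range Q, a ^ q) * (s / 2) + 1 / (2 * s) := hparts
    _ = (s ^ 2 * ∑ q ∈ range Q, a ^ q + 1) / (2 * s) := by
      field_simp
    _ ≤ 1 / s := by
      rw [div_le_div_iff₀ (by positivity) hs]
      nlinarith

theorem sum_geom_div_sqrt_general (a : ℝ) (ha : 0 < a) (ha1 : a < 1) (Q : ℕ) :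
    ∑ q ∈ Finset.range Q, a ^ q / Real.sqrt (q + 1) ≤ 2 / (a * Real.sqrt (1 - a)) := by
  have hs : 0 < √(1 - a) := sqrt_pos.mpr (by linarith)
  calc ∑ q ∈ range Q, a ^ q / √(q + 1)
      ≤ ∑ q ∈ range Q, 2 * (a ^ q * (√(q + 1 : ℕ) - √q)) := by
        refine sum_le_sum fun q _ ↦ ?_
        rw [div_eq_mul_one_div, mul_left_comm, Nat.cast_succ]
        exact mul_le_mul_of_nonneg_left (one_div_sqrt_add_one_le q.cast_nonneg) (by positivity)
    _ ≤ 2 * (1 / √(1 - a)) := by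
        rw [← mul_sum]
        gcongr
        exact sum_pow_mul_sqrt_sub_le ha.le ha1 Q
    _ ≤ 2 / (a * √(1 - a)) := by
        rw [mul_one_div]
        gcongr
        exact mul_le_of_le_one_left hs.le ha1.le

theorem sum_geom_div_sqrt (a : ℝ) (ha : 0 < a) (ha1 : a < 1) (Q : ℕ) (hQ : 0 < Q) :
    ∑ q ∈ Finset.range Q, a ^ q / Real.sqrt (q + 1) ≤ 2 / (a * Real.sqrt (1 - a)) :=
  sum_geom_div_sqrt_general a ha ha1 Q
end

section
/- Given 0 < a < 1 and a natural number Q, the sum ∑_{q=0}^{Q-1} a^q √q (q+1) is at most 4a / (1 - a)^{5/2}. -/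
/-!
Apply AM–GM in the form `√q ≤ (t q + t⁻¹) / 2` to every term and compare with the two power
series `∑ q (q + 1) aᵠ = 2a / (1 - a)³` and `∑ q aᵠ = a / (1 - a)²`. The choice `t = √(1 - a)`
balances the two contributions, each of which becomes `a / (1 - a)^(5/2)`.
-/

open Finset

theorem hasSum_coe_mul_succ_mul_geometric_of_norm_lt_one {𝕜 : Type*} [NormedField 𝕜] {r : 𝕜}
    (hr : ‖r‖ < 1) :
    HasSum (fun n : ℕ ↦ n * (n + 1) * r ^ n) (2 * r / (1 - r) ^ 3) := by
  refine (hasSum_nat_add_iff' 1).mp ?_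
  convert! (hasSum_choose_mul_geometric_of_norm_lt_one 2 hr).mul_left (2 * r) using 1
  · ext n
    have h : (n + 2).choose 2 * 2 = (n + 2) * (n + 1) := by
      rw [Nat.choose_succ_right_eq, Nat.choose_one_right]; rfl
    have h' := congrArg (Nat.cast : ℕ → 𝕜) h
    push_cast at h' ⊢
    linear_combination (-r * r ^ n) * h'
  · simp only [range_one, sum_singleton, Nat.cast_zero, zero_mul, sub_zero]
    ring

theorem Real.sqrt_le_mul_add_inv {x t : ℝ} (hx : 0 ≤ x) (ht : 0 < t) :
    √x ≤ (t * x + t⁻¹) / 2 := by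
  have h : 2 * t * √x ≤ t ^ 2 * x + 1 := by
    nlinarith [sq_nonneg (t * √x - 1), Real.sq_sqrt hx]
  calc √x = 2 * t * √x * t⁻¹ / 2 := by field_simp
    _ ≤ (t ^ 2 * x + 1) * t⁻¹ / 2 := by gcongr
    _ = (t * x + t⁻¹) / 2 := by field_simp

theorem Real.sqrt_natCast_mul_succ_le (q : ℕ) {t : ℝ} (ht : 0 < t) :
    √q * (q + 1) ≤ t / 2 * (q * (q + 1)) + t⁻¹ * q := by
  rcases Nat.eq_zero_or_pos q with rfl | hq
  · simp
  have hq : (1 : ℝ) ≤ q := by exact_mod_cast hq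
  calc √q * (q + 1) ≤ (t * q + t⁻¹) / 2 * (q + 1) := by
        gcongr; exact Real.sqrt_le_mul_add_inv q.cast_nonneg ht
    _ = t / 2 * (q * (q + 1)) + t⁻¹ * ((q + 1) / 2) := by ring
    _ ≤ t / 2 * (q * (q + 1)) + t⁻¹ * q := by gcongr; linarith

theorem sum_range_geometric_mul_sqrt_mul_succ_le {a : ℝ} (ha : 0 ≤ a) (ha1 : a < 1) (Q : ℕ) :
    ∑ q ∈ range Q, a ^ q * √q * (q + 1) ≤ 2 * a / (1 - a) ^ ((5 : ℝ) / 2) := by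
  have hnorm : ‖a‖ < 1 := by rwa [Real.norm_of_nonneg ha]
  have h1a : 0 < 1 - a := sub_pos.2 ha1
  have ht5 : (1 - a) ^ ((5 : ℝ) / 2) = √(1 - a) ^ 5 := by
    rw [Real.sqrt_eq_rpow, ← Real.rpow_natCast, ← Real.rpow_mul h1a.le]
    norm_num
  set t := √(1 - a)
  have ht : 0 < t := Real.sqrt_pos.2 h1a
  have ht2 : t ^ 2 = 1 - a := Real.sq_sqrt h1a.le
  calc ∑ q ∈ range Q, a ^ q * √q * (q + 1)
      ≤ ∑ q ∈ range Q, (t / 2 * (q * (q + 1) * a ^ q) + t⁻¹ * (q * a ^ q)) := by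
        gcongr with q
        nlinarith [Real.sqrt_natCast_mul_succ_le q ht, pow_nonneg ha q]
    _ = t / 2 * ∑ q ∈ range Q, q * (q + 1) * a ^ q + t⁻¹ * ∑ q ∈ range Q, q * a ^ q := by
        rw [sum_add_distrib, mul_sum, mul_sum]
    _ ≤ t / 2 * (2 * a / (1 - a) ^ 3) + t⁻¹ * (a / (1 - a) ^ 2) := by
        gcongr
        · exact sum_le_hasSum _ (fun q _ ↦ by positivity)
            (hasSum_coe_mul_succ_mul_geometric_of_norm_lt_one hnorm)
        · exact sum_le_hasSum _ (fun q _ ↦ by positivity)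
            (hasSum_coe_mul_geometric_of_norm_lt_one hnorm)
    _ = 2 * a / (1 - a) ^ ((5 : ℝ) / 2) := by
        rw [ht5, ← ht2]
        field_simp
        ring

theorem sum_geom_sqrt_mul_general (a : ℝ) (ha : 0 < a) (ha1 : a < 1) (Q : ℕ) :
    ∑ q ∈ Finset.range Q, a ^ q * Real.sqrt q * (q + 1) ≤ 4 * a / (1 - a) ^ ((5 : ℝ) / 2) := by
  refine (sum_range_geometric_mul_sqrt_mul_succ_le ha.le ha1 Q).trans ?_
  gcongr
  norm_num

theorem sum_geom_sqrt_mul (a : ℝ) (ha : 0 < a) (ha1 : a < 1) (Q : ℕ) (hQ : 0 < Q) :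
    ∑ q ∈ Finset.range Q, a ^ q * Real.sqrt q * (q + 1) ≤ 4 * a / (1 - a) ^ ((5 : ℝ) / 2) :=
  sum_geom_sqrt_mul_general a ha ha1 Q
end

section
/- Let 0 < β₂ ≤ 1, ε > 0, and {a_n} a nonnegative real sequence. Define b_n = ∑_{j=1}^n β₂^{n-j} a_j with b_0 = 0. Then ∑_{j=1}^N a_j / (ε + b_j) ≤ ln(1 + b_N/ε) − N ln(β₂). -/
/-! Writing `s n = ε + b n`, the recursion `b (n+1) = β₂ b n + a (n+1)` and `β₂ ≤ 1` give
`β₂ s n ≤ s (n+1) - a (n+1)`. Combined with `1 - 1/t ≤ log t`, each term satisfies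
`a (n+1) / s (n+1) ≤ log s (n+1) - log (s (n+1) - a (n+1)) ≤ log s (n+1) - log s n - log β₂`,
and the sum telescopes to `log (s N / s 0) - N log β₂` with `s 0 = ε`. -/

open Finset

theorem Real.div_le_log_sub_log_sub {x y : ℝ} (hy : 0 < y) (hxy : x < y) :
    x / y ≤ Real.log y - Real.log (y - x) := by
  have hyx : 0 < y - x := sub_pos.mpr hxy
  have h := Real.one_sub_inv_le_log_of_pos (div_pos hy hyx)
  rwa [inv_div, Real.log_div hy.ne' hyx.ne', one_sub_div hy.ne', sub_sub_cancel] at h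

theorem sum_Icc_pow_sub_mul_succ {R : Type*} [CommSemiring R] (β : R) (a : ℕ → R) (n : ℕ) :
    ∑ j ∈ Icc 1 (n + 1), β ^ (n + 1 - j) * a j = β * ∑ j ∈ Icc 1 n, β ^ (n - j) * a j + a (n + 1) := by
  rw [sum_Icc_succ_top (Nat.le_add_left 1 n), Nat.sub_self, pow_zero, one_mul, mul_sum]
  congr 1
  refine sum_congr rfl fun j hj => ?_
  rw [← mul_assoc, ← pow_succ', Nat.sub_add_comm (mem_Icc.mp hj).2]

theorem sum_div_le_log_sub_log_sub_mul_log {β : ℝ} (hβ : 0 < β) {a s : ℕ → ℝ}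
    (hs : ∀ n, 0 < s n) (hstep : ∀ n, β * s n ≤ s (n + 1) - a (n + 1)) (N : ℕ) :
    ∑ j ∈ Icc 1 N, a j / s j ≤ Real.log (s N) - Real.log (s 0) - N * Real.log β := by
  induction N with
  | zero => simp
  | succ n ih =>
    have hpos : 0 < β * s n := mul_pos hβ (hs n)
    have hlt : a (n + 1) < s (n + 1) := by linarith [hstep n]
    have hterm := Real.div_le_log_sub_log_sub (hs (n + 1)) hlt
    have hlog : Real.log β + Real.log (s n) ≤ Real.log (s (n + 1) - a (n + 1)) := by
      rw [← Real.log_mul hβ.ne' (hs n).ne']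
      exact Real.log_le_log hpos (hstep n)
    rw [sum_Icc_succ_top (Nat.le_add_left 1 n)]
    push_cast
    linarith

theorem sum_ratio_lemma_general (β₂ ε : ℝ) (hβ₂ : 0 < β₂) (hβ₂1 : β₂ ≤ 1) (hε : 0 < ε)
    (a : ℕ → ℝ) (ha : ∀ n, 0 ≤ a n)
    (b : ℕ → ℝ) (hb : ∀ n, b n = ∑ j ∈ Finset.Icc 1 n, β₂ ^ (n - j) * a j)
    (N : ℕ) :
    ∑ j ∈ Finset.Icc 1 N, a j / (ε + b j) ≤
      Real.log (1 + b N / ε) - N * Real.log β₂ := by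
  have hb_nonneg (n : ℕ) : 0 ≤ b n :=
    hb n ▸ sum_nonneg fun j _ => mul_nonneg (pow_nonneg hβ₂.le _) (ha j)
  have hs (n : ℕ) : 0 < ε + b n := by linarith [hb_nonneg n]
  have hstep (n : ℕ) : β₂ * (ε + b n) ≤ ε + b (n + 1) - a (n + 1) := by
    rw [hb (n + 1), sum_Icc_pow_sub_mul_succ, ← hb n]
    linarith [mul_le_of_le_one_left hε.le hβ₂1]
  have hlog : Real.log (1 + b N / ε) = Real.log (ε + b N) - Real.log (ε + b 0) := by
    rw [hb 0, Icc_eq_empty (by norm_num), sum_empty, add_zero, ← Real.log_div (hs N).ne' hε.ne',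
      add_div, div_self hε.ne']
  rw [hlog]
  exact sum_div_le_log_sub_log_sub_mul_log hβ₂ hs hstep N

theorem sum_ratio_lemma (β₂ ε : ℝ) (hβ₂ : 0 < β₂) (hβ₂1 : β₂ ≤ 1) (hε : 0 < ε)
    (a : ℕ → ℝ) (ha : ∀ n, 0 ≤ a n)
    (b : ℕ → ℝ) (hb : ∀ n, b n = ∑ j ∈ Finset.Icc 1 n, β₂ ^ (n - j) * a j)
    (N : ℕ) (hN : 0 < N) :
    ∑ j ∈ Finset.Icc 1 N, a j / (ε + b j) ≤
      Real.log (1 + b N / ε) - N * Real.log β₂ :=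
  sum_ratio_lemma_general β₂ ε hβ₂ hβ₂1 hε a ha b hb N
end

section
/- Let 0 < β₂ ≤ 1, 0 < β₁ < β₂, ε > 0, and {a_n} a real sequence. Define b_n = ∑_{j=1}^n β₂^{n-j} a_j² and c_n = ∑_{j=1}^n β₁^{n-j} a_j. Then ∑_{j=1}^n c_j² / (ε + b_j) ≤ (1/((1-β₁)(1-β₁/β₂))) (ln(1 + b_n/ε) − n ln(β₂)). -/
/-!
Cauchy–Schwarz against the weights `β₁ ^ (j - k)` gives `c_j² ≤ (1 - β₁)⁻¹ ∑ β₁ ^ (j - k) a_k²`,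
and since `ε + b_j ≥ β₂ ^ (j - k) (ε + b_k)` each term of `c_j² / (ε + b_j)` is at most
`(β₁ / β₂) ^ (j - k) a_k² / (ε + b_k)`. Summing the geometric series in `j` leaves
`∑ a_k² / (ε + b_k)`, which telescopes against `log (ε + b_k)`: with `u = ε + β₂ b_{k-1}`,
`a_k² / (u + a_k²) ≤ log (u + a_k²) - log u` and `u ≥ β₂ (ε + b_{k-1})`.
-/

open Finset Real

noncomputable def expWeightedSum (β : ℝ) (x : ℕ → ℝ) (m : ℕ) : ℝ :=
  ∑ j ∈ Icc 1 m, β ^ (m - j) * x j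

section expWeightedSum

variable {β : ℝ} {x : ℕ → ℝ}

@[simp] lemma expWeightedSum_zero : expWeightedSum β x 0 = 0 := by
  simp [expWeightedSum]

lemma expWeightedSum_succ (m : ℕ) :
    expWeightedSum β x (m + 1) = β * expWeightedSum β x m + x (m + 1) := by
  rw [expWeightedSum, expWeightedSum, sum_Icc_succ_top (by omega), mul_sum, Nat.sub_self,
    pow_zero, one_mul]
  congr 1
  refine sum_congr rfl fun j hj => ?_
  rw [← mul_assoc, ← pow_succ', Nat.sub_add_comm (mem_Icc.1 hj).2]

lemma expWeightedSum_nonneg (hβ : 0 ≤ β) (hx : ∀ k, 0 ≤ x k) (m : ℕ) :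
    0 ≤ expWeightedSum β x m :=
  sum_nonneg fun j _ => mul_nonneg (pow_nonneg hβ _) (hx j)

lemma pow_sub_mul_expWeightedSum_le (hβ : 0 ≤ β) (hx : ∀ k, 0 ≤ x k) {k j : ℕ}
    (hkj : k ≤ j) :
    β ^ (j - k) * expWeightedSum β x k ≤ expWeightedSum β x j := by
  induction j, hkj using Nat.le_induction with
  | base => simp
  | succ j hkj ih =>
    rw [expWeightedSum_succ, Nat.sub_add_comm hkj, pow_succ', mul_assoc]
    nlinarith [hx (j + 1)]

end expWeightedSum

lemma sum_pow_le_inv_one_sub_of_injOn {ι : Type*} {q : ℝ} (hq₀ : 0 ≤ q) (hq₁ : q < 1)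
    {s : Finset ι} {g : ι → ℕ} (hg : Set.InjOn g s) :
    ∑ i ∈ s, q ^ g i ≤ (1 - q)⁻¹ := by
  rw [← sum_image hg, ← tsum_geometric_of_lt_one hq₀ hq₁]
  exact (summable_geometric_of_lt_one hq₀ hq₁).sum_le_tsum _ fun _ _ => pow_nonneg hq₀ _

lemma sq_expWeightedSum_le {β : ℝ} (hβ₀ : 0 ≤ β) (hβ₁ : β < 1) (x : ℕ → ℝ) (m : ℕ) :
    expWeightedSum β x m ^ 2 ≤ (1 - β)⁻¹ * expWeightedSum β (fun k => x k ^ 2) m := by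
  have hgeom : ∑ j ∈ Icc 1 m, β ^ (m - j) ≤ (1 - β)⁻¹ :=
    sum_pow_le_inv_one_sub_of_injOn hβ₀ hβ₁ fun i hi j hj h => by
      simp only [coe_Icc, Set.mem_Icc] at hi hj; omega
  calc expWeightedSum β x m ^ 2
      ≤ (∑ j ∈ Icc 1 m, β ^ (m - j)) * expWeightedSum β (fun k => x k ^ 2) m :=
        sum_sq_le_sum_mul_sum_of_sq_le_mul _ (fun _ _ => pow_nonneg hβ₀ _)
          (fun _ _ => by positivity) fun _ _ => le_of_eq (by ring)
    _ ≤ _ := by gcongr; exact expWeightedSum_nonneg hβ₀ (fun _ => sq_nonneg _) m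

lemma div_add_le_log_add_sub_log {u x : ℝ} (hu : 0 < u) (hx : 0 ≤ x) :
    x / (u + x) ≤ log (u + x) - log u := by
  have hux : 0 < u + x := by linarith
  have h := one_sub_inv_le_log_of_pos (div_pos hux hu)
  rwa [inv_div, one_sub_div hux.ne', add_sub_cancel_left, log_div hux.ne' hu.ne'] at h

lemma sum_div_add_expWeightedSum_le {β ε : ℝ} (hβ₀ : 0 < β) (hβ₁ : β ≤ 1) (hε : 0 < ε)
    {x : ℕ → ℝ} (hx : ∀ k, 0 ≤ x k) (n : ℕ) :
    ∑ k ∈ Icc 1 n, x k / (ε + expWeightedSum β x k) ≤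
      log (1 + expWeightedSum β x n / ε) - n * log β := by
  have hpos : ∀ m, 0 < ε + expWeightedSum β x m := fun m => by
    linarith [expWeightedSum_nonneg hβ₀.le hx m]
  suffices ∑ k ∈ Icc 1 n, x k / (ε + expWeightedSum β x k) ≤
      log (ε + expWeightedSum β x n) - log ε - n * log β by
    rwa [← log_div (hpos n).ne' hε.ne', add_div, div_self hε.ne'] at this
  induction n with
  | zero => simp
  | succ m ih =>
    have hstep := div_add_le_log_add_sub_log (u := ε + β * expWeightedSum β x m)
      (by nlinarith [expWeightedSum_nonneg hβ₀.le hx m]) (hx (m + 1))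
    have hβε :
        log β + log (ε + expWeightedSum β x m) ≤ log (ε + β * expWeightedSum β x m) := by
      rw [← log_mul hβ₀.ne' (hpos m).ne']
      exact log_le_log (mul_pos hβ₀ (hpos m)) (by nlinarith)
    rw [sum_Icc_succ_top (by omega), expWeightedSum_succ, ← add_assoc]
    push_cast
    linarith

lemma sum_expWeightedSum_le {q : ℝ} (hq₀ : 0 ≤ q) (hq₁ : q < 1) {u : ℕ → ℝ}
    (hu : ∀ k, 0 ≤ u k) (n : ℕ) :
    ∑ j ∈ Icc 1 n, expWeightedSum q u j ≤ (1 - q)⁻¹ * ∑ k ∈ Icc 1 n, u k := by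
  simp only [expWeightedSum]
  rw [sum_comm' (t' := Icc 1 n) (s' := fun k => Icc k n)
    (fun j k => by simp only [mem_Icc]; omega), mul_sum]
  refine sum_le_sum fun k _ => ?_
  rw [← sum_mul]
  gcongr
  · exact hu k
  · exact sum_pow_le_inv_one_sub_of_injOn hq₀ hq₁ fun i hi j hj h => by
      simp only [coe_Icc, Set.mem_Icc] at hi hj; omega

lemma sq_expWeightedSum_div_le {β₁ β₂ ε : ℝ} (hβ₁ : 0 ≤ β₁) (hβ₁' : β₁ < 1) (hβ₂ : 0 < β₂)
    (hβ₂' : β₂ ≤ 1) (hε : 0 < ε) (a : ℕ → ℝ) (j : ℕ) :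
    expWeightedSum β₁ a j ^ 2 / (ε + expWeightedSum β₂ (fun k => a k ^ 2) j) ≤
      (1 - β₁)⁻¹ * expWeightedSum (β₁ / β₂)
        (fun k => a k ^ 2 / (ε + expWeightedSum β₂ (fun k => a k ^ 2) k)) j := by
  set b := expWeightedSum β₂ (fun k => a k ^ 2)
  have hb : ∀ k, 0 ≤ b k := expWeightedSum_nonneg hβ₂.le fun k => sq_nonneg (a k)
  have hpos : ∀ k, 0 < ε + b k := fun k => by linarith [hb k]
  have hdecay : ∀ k ≤ j, β₂ ^ (j - k) * (ε + b k) ≤ ε + b j := fun k hkj => by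
    have := pow_sub_mul_expWeightedSum_le hβ₂.le (fun k => sq_nonneg (a k)) hkj
    nlinarith [pow_le_one₀ hβ₂.le hβ₂' (n := j - k)]
  calc expWeightedSum β₁ a j ^ 2 / (ε + b j)
      ≤ (1 - β₁)⁻¹ * expWeightedSum β₁ (fun k => a k ^ 2) j / (ε + b j) :=
        div_le_div_of_nonneg_right (sq_expWeightedSum_le hβ₁ hβ₁' a j) (hpos j).le
    _ = (1 - β₁)⁻¹ * ∑ k ∈ Icc 1 j, β₁ ^ (j - k) * a k ^ 2 / (ε + b j) := by
        rw [mul_div_assoc, expWeightedSum, sum_div]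
    _ ≤ (1 - β₁)⁻¹ * ∑ k ∈ Icc 1 j, β₁ ^ (j - k) * a k ^ 2 / (β₂ ^ (j - k) * (ε + b k)) := by
        have hC : 0 ≤ (1 - β₁)⁻¹ := inv_nonneg.2 (by linarith)
        gcongr with k hk
        · exact mul_pos (pow_pos hβ₂ _) (hpos k)
        · exact hdecay k (mem_Icc.1 hk).2
    _ = _ := by
        rw [expWeightedSum]
        congr 1
        refine sum_congr rfl fun k _ => ?_
        rw [div_pow, mul_div_mul_comm]

theorem sum_ratio_momentum (β₁ β₂ ε : ℝ) (hβ₁ : 0 < β₁) (hβ₁₂ : β₁ < β₂) (hβ₂ : β₂ ≤ 1)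
    (hε : 0 < ε) (a : ℕ → ℝ)
    (b : ℕ → ℝ) (hb : ∀ m, b m = ∑ j ∈ Finset.Icc 1 m, β₂ ^ (m - j) * (a j) ^ 2)
    (c : ℕ → ℝ) (hc : ∀ m, c m = ∑ j ∈ Finset.Icc 1 m, β₁ ^ (m - j) * a j)
    (n : ℕ) :
    ∑ j ∈ Finset.Icc 1 n, (c j) ^ 2 / (ε + b j) ≤
      1 / ((1 - β₁) * (1 - β₁ / β₂)) * (Real.log (1 + b n / ε) - n * Real.log β₂) := by
  obtain rfl : b = expWeightedSum β₂ (fun k => a k ^ 2) := funext hb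
  obtain rfl : c = expWeightedSum β₁ a := funext hc
  set b := expWeightedSum β₂ (fun k => a k ^ 2)
  set u : ℕ → ℝ := fun k => a k ^ 2 / (ε + b k)
  have hβ₂₀ : 0 < β₂ := hβ₁.trans hβ₁₂
  have hq₁ : β₁ / β₂ < 1 := (div_lt_one hβ₂₀).2 hβ₁₂
  have hC₁ : 0 ≤ (1 - β₁)⁻¹ := inv_nonneg.2 (by linarith)
  have hC₂ : 0 ≤ (1 - β₁ / β₂)⁻¹ := inv_nonneg.2 (sub_nonneg.2 hq₁.le)
  have hu : ∀ k, 0 ≤ u k := fun k =>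
    div_nonneg (sq_nonneg _)
      (add_nonneg hε.le (expWeightedSum_nonneg hβ₂₀.le (fun k => sq_nonneg (a k)) k))
  calc _ ≤ ∑ j ∈ Icc 1 n, (1 - β₁)⁻¹ * expWeightedSum (β₁ / β₂) u j :=
        sum_le_sum fun j _ =>
          sq_expWeightedSum_div_le hβ₁.le (hβ₁₂.trans_le hβ₂) hβ₂₀ hβ₂ hε a j
    _ ≤ (1 - β₁)⁻¹ * ((1 - β₁ / β₂)⁻¹ * ∑ k ∈ Icc 1 n, u k) := by
        rw [← mul_sum]
        gcongr
        exact sum_expWeightedSum_le (div_pos hβ₁ hβ₂₀).le hq₁ hu n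
    _ ≤ (1 - β₁)⁻¹ * ((1 - β₁ / β₂)⁻¹ * (log (1 + b n / ε) - n * log β₂)) := by
        gcongr
        exact sum_div_add_expWeightedSum_le hβ₂₀ hβ₂ hε (fun k => sq_nonneg (a k)) n
    _ = _ := by rw [one_div, mul_inv, mul_assoc]
end

section
/- Given 0 < a < 1 and Q ∈ ℕ, the sum ∑_{q=0}^{Q-1} a^q √(q+1) is at most (1/(1-a))(1 + √π/(2√(−ln a))). -/
/-!
Abel summation gives `(1 - a) ∑_{q<Q} a^q √(q+1) ≤ 1 + ∑_{q<Q-1} a^(q+1) (√(q+2) - √(q+1))`.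
By concavity of `√`, the `q`-th term is at most `e^(-c(q+1)) / (2√(q+1))` with `c = -ln a`, and
since `s ↦ e^(-cs) / √s` is decreasing, the sum of these is at most
`½ ∫₀^∞ e^(-cs) / √s ds = Γ(1/2) / (2√c) = √π / (2√c)`.
-/

open Real MeasureTheory Set

theorem one_sub_mul_sum_range_pow_mul_add {R : Type*} [CommRing R] (a : R) (b : ℕ → R) (n : ℕ) :
    (1 - a) * ∑ q ∈ Finset.range (n + 1), a ^ q * b (q + 1) + a ^ (n + 1) * b (n + 1) =
      b 1 + ∑ q ∈ Finset.range n, a ^ (q + 1) * (b (q + 2) - b (q + 1)) := by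
  induction n with
  | zero =>
    simp only [zero_add, Finset.sum_range_one, Finset.sum_range_zero, pow_zero, pow_one]
    ring
  | succ n ih =>
    rw [Finset.sum_range_succ (fun q => a ^ q * b (q + 1)) (n + 1),
      Finset.sum_range_succ (fun q => a ^ (q + 1) * (b (q + 2) - b (q + 1))) n]
    linear_combination ih

theorem sqrt_add_one_sub_sqrt_le {x : ℝ} (hx : 0 < x) : √(x + 1) - √x ≤ 1 / (2 * √x) := by
  have hmono : √x ≤ √(x + 1) := sqrt_le_sqrt (by linarith)
  have hdiff : (√(x + 1) - √x) * (√(x + 1) + √x) = 1 := by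
    linear_combination sq_sqrt (by linarith : 0 ≤ x + 1) - sq_sqrt hx.le
  rw [le_div_iff₀ (by positivity)]
  nlinarith

theorem one_sub_mul_sum_range_pow_mul_sqrt_le {a : ℝ} (ha : 0 ≤ a) (n : ℕ) :
    (1 - a) * ∑ q ∈ Finset.range (n + 1), a ^ q * √(q + 1) ≤
      1 + ∑ q ∈ Finset.range n, a ^ (q + 1) * (√(q + 2) - √(q + 1)) := by
  have habel := one_sub_mul_sum_range_pow_mul_add a (fun k => √(k : ℝ)) n
  push_cast at habel
  rw [sqrt_one] at habel
  rw [← habel]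
  exact le_add_of_nonneg_right (by positivity)

/-- Unlike `AntitoneOn.sum_range_le_integral`, this only asks for antitonicity on the open
half-line, so `f` may blow up at `0`. -/
theorem sum_range_le_integral_Ioi_of_antitoneOn {f : ℝ → ℝ} (anti : AntitoneOn f (Ioi 0))
    (integrable : IntegrableOn f (Ioi 0)) (nonneg : ∀ t ∈ Ioi 0, 0 ≤ f t) (N : ℕ) :
    ∑ n ∈ Finset.range N, f (n + 1 : ℕ) ≤ ∫ x in Ioi 0, f x := by
  have hIoc : ∀ n : ℕ, Ioc (n : ℝ) (n + 1 : ℕ) ⊆ Ioi 0 := fun n x hx =>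
    (Nat.cast_nonneg n).trans_lt hx.1
  have hint : ∀ n : ℕ, IntervalIntegrable f volume n (n + 1 : ℕ) := fun n =>
    (intervalIntegrable_iff_integrableOn_Ioc_of_le (by simp)).2 (integrable.mono_set (hIoc n))
  calc ∑ n ∈ Finset.range N, f (n + 1 : ℕ)
      ≤ ∑ n ∈ Finset.range N, ∫ x in (n : ℝ)..(n + 1 : ℕ), f x := by
        gcongr with n
        calc f (n + 1 : ℕ) = ∫ _ in (n : ℝ)..(n + 1 : ℕ), f (n + 1 : ℕ) := by simp
          _ ≤ ∫ x in (n : ℝ)..(n + 1 : ℕ), f x :=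
            intervalIntegral.integral_mono_on_of_le_Ioo (by simp) (by simp) (hint n) fun x hx =>
              anti (hIoc n (Ioo_subset_Ioc_self hx)) (hIoc n ⟨by simp, le_rfl⟩) hx.2.le
    _ = ∫ x in (0 : ℝ)..N, f x := by
        simpa using intervalIntegral.sum_integral_adjacent_intervals (fun k _ => hint k)
    _ ≤ ∫ x in Ioi 0, f x := by
        rw [intervalIntegral.integral_of_le (Nat.cast_nonneg N)]
        exact setIntegral_mono_set integrable (ae_restrict_of_forall_mem measurableSet_Ioi nonneg)
          Ioc_subset_Ioi_self.eventuallyLE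

theorem exp_neg_mul_div_sqrt_eqOn (c : ℝ) :
    EqOn (fun s => exp (-(c * s)) / √s) (fun s => s ^ ((1 / 2 : ℝ) - 1) * exp (-(c * s)))
      (Ioi 0) := fun s hs => by
  dsimp only
  rw [show (1 / 2 : ℝ) - 1 = -(1 / 2) by norm_num, rpow_neg hs.le, ← sqrt_eq_rpow]
  ring

theorem integrableOn_exp_neg_mul_div_sqrt {c : ℝ} (hc : 0 < c) :
    IntegrableOn (fun s => exp (-(c * s)) / √s) (Ioi 0) := by
  refine IntegrableOn.congr_fun ?_ (exp_neg_mul_div_sqrt_eqOn c).symm measurableSet_Ioi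
  simpa using integrableOn_rpow_mul_exp_neg_mul_rpow (p := 1) (s := (1 / 2 : ℝ) - 1) (b := c)
    (by norm_num) one_pos hc

theorem integral_exp_neg_mul_div_sqrt {c : ℝ} (hc : 0 < c) :
    ∫ s in Ioi 0, exp (-(c * s)) / √s = √π / √c := by
  rw [setIntegral_congr_fun measurableSet_Ioi (exp_neg_mul_div_sqrt_eqOn c),
    integral_rpow_mul_exp_neg_mul_Ioi one_half_pos hc, Gamma_one_half_eq, ← sqrt_eq_rpow,
    sqrt_div' _ hc.le, sqrt_one]
  ring

theorem antitoneOn_exp_neg_mul_div_sqrt {c : ℝ} (hc : 0 ≤ c) :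
    AntitoneOn (fun s => exp (-(c * s)) / √s) (Ioi 0) := fun x hx y hy hxy => by
  have : 0 < √x := sqrt_pos.2 hx
  dsimp only
  gcongr

theorem sum_geom_sqrt'_general (a : ℝ) (ha : 0 < a) (ha1 : a < 1) (Q : ℕ) :
    ∑ q ∈ Finset.range Q, a ^ q * Real.sqrt (q + 1) ≤
      1 / (1 - a) * (1 + Real.sqrt Real.pi / (2 * Real.sqrt (-Real.log a))) := by
  set c := -log a with hc_def
  have hc : 0 < c := neg_pos.2 (log_neg ha ha1)
  have hpow (q : ℕ) : a ^ q = exp (-(c * q)) := by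
    rw [← rpow_natCast, rpow_def_of_pos ha, hc_def, neg_mul, neg_neg]
  rcases Q with _ | n
  · simp only [Finset.range_zero, Finset.sum_empty]
    positivity
  rw [div_mul_eq_mul_div, le_div_iff₀ (sub_pos.2 ha1), one_mul, mul_comm]
  calc (1 - a) * ∑ q ∈ Finset.range (n + 1), a ^ q * √(q + 1)
      ≤ 1 + ∑ q ∈ Finset.range n, a ^ (q + 1) * (√(q + 2) - √(q + 1)) :=
        one_sub_mul_sum_range_pow_mul_sqrt_le ha.le n
    _ ≤ 1 + ∑ q ∈ Finset.range n, (fun s => exp (-(c * s)) / √s) (q + 1 : ℕ) / 2 := by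
        gcongr with q
        rw [hpow, show (q : ℝ) + 2 = q + 1 + 1 by ring]
        push_cast
        calc _ ≤ exp (-(c * (q + 1))) * (1 / (2 * √(q + 1))) :=
              mul_le_mul_of_nonneg_left (sqrt_add_one_sub_sqrt_le (Nat.cast_add_one_pos q))
                (by positivity)
          _ = _ := by ring
    _ ≤ 1 + (∫ s in Ioi 0, exp (-(c * s)) / √s) / 2 := by
        rw [← Finset.sum_div]
        gcongr
        exact sum_range_le_integral_Ioi_of_antitoneOn (antitoneOn_exp_neg_mul_div_sqrt hc.le)
          (integrableOn_exp_neg_mul_div_sqrt hc) (fun s _ => by positivity) n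
    _ = 1 + √π / (2 * √c) := by
        rw [integral_exp_neg_mul_div_sqrt hc]
        ring

theorem sum_geom_sqrt' (a : ℝ) (ha : 0 < a) (ha1 : a < 1) (Q : ℕ) (hQ : 0 < Q) :
    ∑ q ∈ Finset.range Q, a ^ q * Real.sqrt (q + 1) ≤
      1 / (1 - a) * (1 + Real.sqrt Real.pi / (2 * Real.sqrt (-Real.log a))) :=
  sum_geom_sqrt'_general a ha ha1 Q
end

section
/- If ℓ : ℝ^d → ℝ is twice differentiable, L-Lipschitz, γ-smooth, and H-Hessian-Lipschitz (i.e., ‖∇²ℓ(u) − ∇²ℓ(v)‖ ≤ H‖u−v‖), and U(x) = x − θ∇ℓ(x), then x ↦ ℓ(U(x)) is (θLH + (1+θγ)²γ)-smooth, i.e., its gradient is Lipschitz with that constant. -/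
/-!
By the chain rule `D(ℓ ∘ U)(x) = Dℓ(U x) ∘ DU(x)` with `DU = I - θ ∇²ℓ`. Writing the difference at
`u` and `v` as `(Dℓ(U u) - Dℓ(U v)) ∘ DU(u) + Dℓ(U v) ∘ (DU(u) - DU(v))`, the first term is at most
`γ ‖U u - U v‖ ‖DU(u)‖ ≤ γ (1 + θγ)² ‖u - v‖`, since both `U` and `DU` are controlled by `1 + θγ`,
and the second at most `L · θH ‖u - v‖`, by the Hessian-Lipschitz bound.
-/

open InnerProductSpace

section CompDeriv

variable {𝕜 : Type*} [NontriviallyNormedField 𝕜]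
  {E F G : Type*} [NormedAddCommGroup E] [NormedSpace 𝕜 E] [NormedAddCommGroup F] [NormedSpace 𝕜 F]
  [NormedAddCommGroup G] [NormedSpace 𝕜 G]

theorem norm_fderiv_comp_sub_fderiv_comp_le {ℓ : F → G} {U : E → F}
    (hℓ : Differentiable 𝕜 ℓ) (hU : Differentiable 𝕜 U) {L γ A M : ℝ} (hγ : 0 ≤ γ)
    (hL : ∀ y, ‖fderiv 𝕜 ℓ y‖ ≤ L) (hℓlip : ∀ y z, ‖fderiv 𝕜 ℓ y - fderiv 𝕜 ℓ z‖ ≤ γ * ‖y - z‖)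
    (hA : ∀ x, ‖fderiv 𝕜 U x‖ ≤ A) (hUlip : ∀ x y, ‖U x - U y‖ ≤ A * ‖x - y‖)
    (hM : ∀ x y, ‖fderiv 𝕜 U x - fderiv 𝕜 U y‖ ≤ M * ‖x - y‖) (u v : E) :
    ‖fderiv 𝕜 (ℓ ∘ U) u - fderiv 𝕜 (ℓ ∘ U) v‖ ≤ (L * M + γ * A ^ 2) * ‖u - v‖ := by
  have hL0 : 0 ≤ L := (norm_nonneg _).trans (hL (U u))
  have hA0 : 0 ≤ A := (norm_nonneg _).trans (hA u)
  have hsplit : fderiv 𝕜 (ℓ ∘ U) u - fderiv 𝕜 (ℓ ∘ U) v =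
      (fderiv 𝕜 ℓ (U u) - fderiv 𝕜 ℓ (U v)).comp (fderiv 𝕜 U u) +
        (fderiv 𝕜 ℓ (U v)).comp (fderiv 𝕜 U u - fderiv 𝕜 U v) := by
    rw [fderiv_comp u (hℓ _) (hU u), fderiv_comp v (hℓ _) (hU v),
      ContinuousLinearMap.sub_comp, ContinuousLinearMap.comp_sub]
    abel
  have hfirst : ‖(fderiv 𝕜 ℓ (U u) - fderiv 𝕜 ℓ (U v)).comp (fderiv 𝕜 U u)‖ ≤
      γ * (A * ‖u - v‖) * A := by
    refine (ContinuousLinearMap.opNorm_comp_le _ _).trans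
      (mul_le_mul ((hℓlip _ _).trans ?_) (hA u) (norm_nonneg _) (by positivity))
    exact mul_le_mul_of_nonneg_left (hUlip u v) hγ
  have hsecond : ‖(fderiv 𝕜 ℓ (U v)).comp (fderiv 𝕜 U u - fderiv 𝕜 U v)‖ ≤ L * (M * ‖u - v‖) :=
    (ContinuousLinearMap.opNorm_comp_le _ _).trans
      (mul_le_mul (hL _) (hM u v) (norm_nonneg _) hL0)
  calc _ ≤ _ := hsplit ▸ norm_add_le _ _
    _ ≤ γ * (A * ‖u - v‖) * A + L * (M * ‖u - v‖) := add_le_add hfirst hsecond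
    _ = (L * M + γ * A ^ 2) * ‖u - v‖ := by ring

end CompDeriv

section GradientStep

variable {𝕜 : Type*} [NontriviallyNormedField 𝕜]
  {E : Type*} [NormedAddCommGroup E] [NormedSpace 𝕜 E] {g : E → E} (c : 𝕜)

theorem fderiv_sub_smul_self {x : E} (hg : DifferentiableAt 𝕜 g x) :
    fderiv 𝕜 (fun x => x - c • g x) x = ContinuousLinearMap.id 𝕜 E - c • fderiv 𝕜 g x := by
  have hcg : DifferentiableAt 𝕜 (fun x => c • g x) x := hg.const_smul c
  rw [fderiv_fun_sub differentiableAt_fun_id hcg, fderiv_fun_id,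
    fderiv_fun_const_smul hg]

theorem norm_fderiv_sub_smul_self_le {x : E} (hg : DifferentiableAt 𝕜 g x) {K : ℝ}
    (hK : ‖fderiv 𝕜 g x‖ ≤ K) :
    ‖fderiv 𝕜 (fun x => x - c • g x) x‖ ≤ 1 + ‖c‖ * K := by
  rw [fderiv_sub_smul_self c hg]
  refine (norm_sub_le _ _).trans (add_le_add ContinuousLinearMap.norm_id_le ?_)
  rw [norm_smul]
  exact mul_le_mul_of_nonneg_left hK (norm_nonneg c)

theorem norm_fderiv_sub_smul_self_sub_le (hg : Differentiable 𝕜 g) {H : ℝ}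
    (hH : ∀ u v, ‖fderiv 𝕜 g u - fderiv 𝕜 g v‖ ≤ H * ‖u - v‖) (u v : E) :
    ‖fderiv 𝕜 (fun x => x - c • g x) u - fderiv 𝕜 (fun x => x - c • g x) v‖ ≤
      ‖c‖ * H * ‖u - v‖ := by
  rw [fderiv_sub_smul_self c (hg u), fderiv_sub_smul_self c (hg v), sub_sub_sub_cancel_left,
    ← smul_sub, norm_smul, mul_assoc, norm_sub_rev u v]
  exact mul_le_mul_of_nonneg_left (hH v u) (norm_nonneg c)

theorem norm_sub_smul_self_sub_le {γ : ℝ} (hγ : ∀ u v, ‖g u - g v‖ ≤ γ * ‖u - v‖) (u v : E) :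
    ‖(u - c • g u) - (v - c • g v)‖ ≤ (1 + ‖c‖ * γ) * ‖u - v‖ := by
  rw [sub_sub_sub_comm, ← smul_sub]
  calc _ ≤ ‖u - v‖ + ‖c‖ * ‖g u - g v‖ := (norm_sub_le _ _).trans_eq (by rw [norm_smul])
    _ ≤ ‖u - v‖ + ‖c‖ * (γ * ‖u - v‖) := by gcongr; exact hγ u v
    _ = (1 + ‖c‖ * γ) * ‖u - v‖ := by ring

end GradientStep

section Gradient

variable {𝕜 : Type*} [RCLike 𝕜] {F : Type*} [NormedAddCommGroup F] [InnerProductSpace 𝕜 F]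
  [CompleteSpace F] (f : F → 𝕜)

theorem norm_gradient (x : F) : ‖gradient f x‖ = ‖fderiv 𝕜 f x‖ :=
  (toDual 𝕜 F).symm.norm_map _

theorem norm_gradient_sub_gradient (x y : F) :
    ‖gradient f x - gradient f y‖ = ‖fderiv 𝕜 f x - fderiv 𝕜 f y‖ := by
  rw [gradient, gradient, ← map_sub, LinearIsometryEquiv.norm_map]

end Gradient

theorem ContDiff.gradient {F : Type*} [NormedAddCommGroup F] [InnerProductSpace ℝ F]
    [CompleteSpace F] {f : F → ℝ} {n : WithTop ℕ∞} (hf : ContDiff ℝ (n + 1) f) :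
    ContDiff ℝ n (gradient f) :=
  (toDual ℝ F).symm.contDiff.comp (hf.fderiv_right le_rfl)

theorem adapted_loss_smooth {d : ℕ} (ℓ : EuclideanSpace ℝ (Fin d) → ℝ)
    (L γ H θ : ℝ) (hθ : 0 < θ)
    (hC2 : ContDiff ℝ 2 ℓ)
    (hL : ∀ x, ‖gradient ℓ x‖ ≤ L)
    (hgrad : ∀ u v, ‖gradient ℓ u - gradient ℓ v‖ ≤ γ * ‖u - v‖)
    (hHess : ∀ u v, ‖fderiv ℝ (gradient ℓ) u - fderiv ℝ (gradient ℓ) v‖ ≤ H * ‖u - v‖) :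
    ∀ u v, ‖gradient (fun x => ℓ (x - θ • gradient ℓ x)) u -
            gradient (fun x => ℓ (x - θ • gradient ℓ x)) v‖ ≤
      (θ * L * H + (1 + θ * γ) ^ 2 * γ) * ‖u - v‖ := by
  intro u v
  rcases eq_or_ne u v with rfl | huv
  · simp
  have hγ : 0 ≤ γ := nonneg_of_mul_nonneg_left ((norm_nonneg _).trans (hgrad u v))
    (norm_pos_iff.mpr (sub_ne_zero.mpr huv))
  have hg : Differentiable ℝ (gradient ℓ) := (hC2.gradient (n := 1)).differentiable one_ne_zero
  have hgD (x) : ‖fderiv ℝ (gradient ℓ) x‖ ≤ γ :=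
    norm_fderiv_le_of_lipschitz ℝ (C := ⟨γ, hγ⟩) <| LipschitzWith.of_dist_le_mul fun a b => by
      rw [dist_eq_norm, dist_eq_norm]; exact hgrad a b
  rw [norm_gradient_sub_gradient]
  exact (norm_fderiv_comp_sub_fderiv_comp_le (hC2.differentiable two_ne_zero)
    (differentiable_id.sub (hg.const_smul θ)) hγ (fun y => norm_gradient ℓ y ▸ hL y)
    (fun y z => norm_gradient_sub_gradient ℓ y z ▸ hgrad y z)
    (fun x => norm_fderiv_sub_smul_self_le θ (hg x) (hgD x))
    (norm_sub_smul_self_sub_le θ hgrad) (norm_fderiv_sub_smul_self_sub_le θ hg hHess) u v).trans_eq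
    (by rw [Real.norm_of_nonneg hθ.le]; ring)
end

section
/- Let u : ℕ → ℝ₊ be nonnegative with u_1 = 0 and define v_{t+1} = v_t + u_t for t ≥ 1 with v_1 = 0. Then for any ε > 0 and T ≥ 1, ∑_{t=1}^T u_t / (ε + v_{t+1}) ≤ ln(1 + (∑_{t=1}^T u_t)/ε). -/
open Finset Real

/-- This is `1 - x⁻¹ ≤ log x` at `x = b / a`. -/
lemma sub_div_le_log_sub_log {a b : ℝ} (ha : 0 < a) (hb : 0 < b) :
    (b - a) / b ≤ log b - log a := by
  have h := one_sub_inv_le_log_of_pos (div_pos hb ha)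
  rwa [log_div hb.ne' ha.ne', inv_div, ← div_self hb.ne', ← sub_div] at h

/-- The sum is a lower Riemann sum of `∫ dx / x`, and telescopes against `log`. -/
lemma sum_Ico_sub_div_le_log_sub_log (w : ℕ → ℝ) {m n : ℕ} (hmn : m ≤ n)
    (hw : ∀ t, m ≤ t → 0 < w t) :
    ∑ t ∈ Ico m n, (w (t + 1) - w t) / w (t + 1) ≤ log (w n) - log (w m) := by
  rw [← sum_Ico_sub (fun t ↦ log (w t)) hmn]
  refine sum_le_sum fun t ht ↦ ?_
  have hmt := (mem_Ico.1 ht).1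
  exact sub_div_le_log_sub_log (hw t hmt) (hw (t + 1) (by omega))

lemma eq_sum_Icc_of_add_one_eq_add {M : Type*} [AddCommMonoid M] {u v : ℕ → M} (hv1 : v 1 = 0)
    (hv : ∀ t, 1 ≤ t → v (t + 1) = v t + u t) (n : ℕ) :
    v (n + 1) = ∑ t ∈ Icc 1 n, u t := by
  induction n with
  | zero => simpa using hv1
  | succ n ih => rw [hv (n + 1) (by omega), ih, sum_Icc_succ_top (by omega)]

theorem adagrad_sum_ratio_general (u v : ℕ → ℝ) (hu : ∀ t, 0 ≤ u t)
    (hv1 : v 1 = 0) (hv : ∀ t, 1 ≤ t → v (t + 1) = v t + u t)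
    (ε : ℝ) (hε : 0 < ε) (T : ℕ) :
    ∑ t ∈ Finset.Icc 1 T, u t / (ε + v (t + 1)) ≤
      Real.log (1 + (∑ t ∈ Finset.Icc 1 T, u t) / ε) := by
  have hv_sum := eq_sum_Icc_of_add_one_eq_add hv1 hv
  have hw : ∀ t, 1 ≤ t → 0 < ε + v t := by
    rintro (_ | n) hn
    · omega
    · rw [hv_sum n]
      exact add_pos_of_pos_of_nonneg hε (sum_nonneg fun i _ ↦ hu i)
  calc ∑ t ∈ Icc 1 T, u t / (ε + v (t + 1))
      = ∑ t ∈ Ico 1 (T + 1), ((ε + v (t + 1)) - (ε + v t)) / (ε + v (t + 1)) := by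
        rw [Ico_add_one_right_eq_Icc]
        refine sum_congr rfl fun t ht ↦ ?_
        rw [hv t (mem_Icc.1 ht).1, add_sub_add_left_eq_sub, add_sub_cancel_left]
    _ ≤ log (ε + v (T + 1)) - log (ε + v 1) := sum_Ico_sub_div_le_log_sub_log _ (by omega) hw
    _ = log (1 + (∑ t ∈ Icc 1 T, u t) / ε) := by
        rw [hv1, add_zero, ← log_div (hw _ (by omega)).ne' hε.ne', hv_sum, add_div, div_self hε.ne']

theorem adagrad_sum_ratio (u v : ℕ → ℝ) (hu : ∀ t, 0 ≤ u t) (hu1 : u 1 = 0)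
    (hv1 : v 1 = 0) (hv : ∀ t, 1 ≤ t → v (t + 1) = v t + u t)
    (ε : ℝ) (hε : 0 < ε) (T : ℕ) (hT : 1 ≤ T) :
    ∑ t ∈ Finset.Icc 1 T, u t / (ε + v (t + 1)) ≤
      Real.log (1 + (∑ t ∈ Finset.Icc 1 T, u t) / ε) :=
  adagrad_sum_ratio_general u v hu hv1 hv ε hε T
end
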